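/- Let G be a group with a symmetric generating set S, let N be a nontrivial normal subgroup, π : G → G/N the quotient map, and α = min{l_S(y) : y ∈ N, y ≠ e}. Let r, R ≥ 0 with 4(R + r) < α, let g₀ ∈ G, let a : G → ℂ be finitely supported with supp a ⊆ {g : l_S(g) ≤ r}, and let φ : G/N → ℂ be finitely supported with supp φ contained in the set {x ∈ G/N : ∃ h ∈ G, π(h) = x and l_S(h·g₀⁻¹) ≤ R}. Define φ' : G → ℂ by φ'(h) = φ(π(h)) if l_S(h·g₀⁻¹) ≤ R + r and φ'(h) = 0 otherwise. Then ∑_{h∈G} |φ'(h)|² = ∑_{x∈G/N} |φ(x)|², and ∑_{h∈G} |(λ_G(a)φ')(h)|² = ∑_{x∈G/N} |(λ_{G/N}(a)φ)(x)|², where (λ_G(a)ψ)(h) = ∑_{g∈G} a(g)·ψ(g⁻¹h) and (λ_{G/N}(a)φ)(x) = ∑_{g∈G} a(g)·φ(π(g)⁻¹·x). -/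

import Mathlib

/-- The word length of `g` with respect to a generating set `S`: the least `n`
such that `g` is a product of `n` elements of `S`. -/
noncomputable def wordLength {G : Type*} [Group G] (S : Set G) (g : G) : ℕ :=
  sInf {n : ℕ | ∃ l : List G, l.length = n ∧ (∀ x ∈ l, x ∈ S) ∧ l.prod = g}

/-!
Every nontrivial element of `N` has word length at least `α`, so two elements `h₁, h₂` with the
same image in `G ⧸ N` and `l_S(h₁ g₀⁻¹) + l_S(h₂ g₀⁻¹) < α` coincide; in particular `π` is
injective on the ball of radius `R + 2r` around `g₀`. The functions `φ'` and `λ_G(a) φ'` live on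
that ball, `φ` and `λ_{G/N}(a) φ` on its image, and on the ball `φ' = φ ∘ π` and
`λ_G(a) φ' = (λ_{G/N}(a) φ) ∘ π`. The second identity holds because `φ'` still agrees with
`φ ∘ π` somewhat beyond its cut-off radius `R + r`, which is where `4(R + r) < α` is needed.
Both sums then match term by term.
-/

open Function

section WordLength

variable {G : Type*} [Group G] {S : Set G}

theorem wordLength_le_length {g : G} {l : List G} (hl : ∀ x ∈ l, x ∈ S) (hp : l.prod = g) :
    wordLength S g ≤ l.length :=
  Nat.sInf_le ⟨l, rfl, hl, hp⟩

theorem exists_list_length_eq_wordLength (hsym : S⁻¹ = S) (hgen : Subgroup.closure S = ⊤)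
    (g : G) : ∃ l : List G, l.length = wordLength S g ∧ (∀ x ∈ l, x ∈ S) ∧ l.prod = g := by
  have hg : g ∈ (Subgroup.closure S).toSubmonoid := hgen ▸ Subgroup.mem_top g
  rw [Subgroup.closure_toSubmonoid, hsym, Set.union_self] at hg
  obtain ⟨l, hl, hp⟩ := Submonoid.exists_list_of_mem_closure hg
  have hne : {n : ℕ | ∃ l : List G, l.length = n ∧ (∀ x ∈ l, x ∈ S) ∧ l.prod = g}.Nonempty :=
    ⟨l.length, l, rfl, hl, hp⟩
  exact Nat.sInf_mem hne

theorem wordLength_mul_le (hsym : S⁻¹ = S) (hgen : Subgroup.closure S = ⊤) (g h : G) :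
    wordLength S (g * h) ≤ wordLength S g + wordLength S h := by
  obtain ⟨l₁, hlen₁, hl₁, hp₁⟩ := exists_list_length_eq_wordLength hsym hgen g
  obtain ⟨l₂, hlen₂, hl₂, hp₂⟩ := exists_list_length_eq_wordLength hsym hgen h
  have hl : ∀ x ∈ l₁ ++ l₂, x ∈ S := fun x hx => (List.mem_append.mp hx).elim (hl₁ x) (hl₂ x)
  simpa [hlen₁, hlen₂] using wordLength_le_length hl (by rw [List.prod_append, hp₁, hp₂])

theorem wordLength_inv_le (hsym : S⁻¹ = S) (hgen : Subgroup.closure S = ⊤) (g : G) :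
    wordLength S g⁻¹ ≤ wordLength S g := by
  obtain ⟨l, hlen, hl, hp⟩ := exists_list_length_eq_wordLength hsym hgen g
  have hl' : ∀ x ∈ (l.map (·⁻¹)).reverse, x ∈ S := by
    simp only [List.mem_reverse, List.mem_map, forall_exists_index, and_imp]
    rintro _ y hy rfl
    exact hsym ▸ Set.inv_mem_inv.mpr (hl y hy)
  simpa [hlen] using wordLength_le_length hl' (by rw [← List.prod_inv_reverse, hp])

theorem wordLength_mul_inv_le (hsym : S⁻¹ = S) (hgen : Subgroup.closure S = ⊤) (x y z : G) :
    wordLength S (x * y⁻¹) ≤ wordLength S (x * z⁻¹) + wordLength S (y * z⁻¹) :=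
  calc wordLength S (x * y⁻¹) = wordLength S (x * z⁻¹ * (y * z⁻¹)⁻¹) := by group
    _ ≤ wordLength S (x * z⁻¹) + wordLength S (y * z⁻¹)⁻¹ := wordLength_mul_le hsym hgen _ _
    _ ≤ wordLength S (x * z⁻¹) + wordLength S (y * z⁻¹) :=
      Nat.add_le_add_left (wordLength_inv_le hsym hgen _) _

end WordLength

theorem finsum_eq_finsum_of_injOn {α β M : Type*} [AddCommMonoid M] {π : α → β} {B : Set α}
    {f : α → M} {F : β → M} (hπ : Set.InjOn π B) (hf : support f ⊆ B)
    (hF : support F ⊆ π '' B) (hfF : ∀ x ∈ B, f x = F (π x)) :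
    ∑ᶠ x, f x = ∑ᶠ y, F y :=
  calc ∑ᶠ x, f x = ∑ᶠ x ∈ B, f x := by
        rw [← finsum_mem_univ]
        exact finsum_mem_inter_support_eq' f _ _ fun x hx => iff_of_true trivial (hf hx)
    _ = ∑ᶠ x ∈ B, F (π x) := finsum_mem_congr rfl hfF
    _ = ∑ᶠ y ∈ π '' B, F y := (finsum_mem_image hπ).symm
    _ = ∑ᶠ y, F y := by
        rw [← finsum_mem_univ F]
        exact finsum_mem_inter_support_eq' F _ _ fun y hy => iff_of_true (hF hy) trivial

theorem exists_ne_zero_of_finsum_ne_zero {α M : Type*} [AddCommMonoid M] {f : α → M}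
    (h : ∑ᶠ x, f x ≠ 0) : ∃ x, f x ≠ 0 :=
  not_forall.mp (mt finsum_eq_zero_of_forall_eq_zero h)

theorem support_norm_sq {α E : Type*} [NormedAddCommGroup E] (f : α → E) :
    support (fun x => ‖f x‖ ^ 2) = support f := by
  ext x
  simp

section Lift

variable {G : Type*} [Group G] {S : Set G} {N : Subgroup G}

/-- A ball for the right-invariant word metric `(x, y) ↦ l_S(x y⁻¹)`. -/
def wordBall (S : Set G) (g₀ : G) (ρ : ℕ) : Set G :=
  {h | wordLength S (h * g₀⁻¹) ≤ ρ}

theorem mem_wordBall {g₀ h : G} {ρ : ℕ} :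
    h ∈ wordBall S g₀ ρ ↔ wordLength S (h * g₀⁻¹) ≤ ρ :=
  Iff.rfl

theorem wordBall_mono {g₀ : G} {ρ ρ' : ℕ} (h : ρ ≤ ρ') : wordBall S g₀ ρ ⊆ wordBall S g₀ ρ' :=
  fun _ hx => hx.trans h

/-- `λ_G(a) ψ`. -/
noncomputable def conv (a ψ : G → ℂ) (h : G) : ℂ :=
  ∑ᶠ g, a g * ψ (g⁻¹ * h)

/-- `λ_{G/N}(a) φ`. -/
noncomputable def convQuot (N : Subgroup G) [N.Normal] (a : G → ℂ) (φ : G ⧸ N → ℂ)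
    (x : G ⧸ N) : ℂ :=
  ∑ᶠ g, a g * φ ((g : G ⧸ N)⁻¹ * x)

noncomputable def liftToBall (S : Set G) (N : Subgroup G) (g₀ : G) (ρ : ℕ) (φ : G ⧸ N → ℂ)
    (h : G) : ℂ :=
  if wordLength S (h * g₀⁻¹) ≤ ρ then φ h else 0

theorem support_liftToBall_subset {g₀ : G} {φ : G ⧸ N → ℂ} (ρ : ℕ) :
    support (liftToBall S N g₀ ρ φ) ⊆ wordBall S g₀ ρ := by
  intro h hh
  by_contra hρ
  exact hh (if_neg hρ)

variable [N.Normal] {α : ℕ}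

theorem eq_of_mk_eq_of_wordLength_add_lt (hsym : S⁻¹ = S) (hgen : Subgroup.closure S = ⊤)
    (hα : ∀ y ∈ N, y ≠ 1 → α ≤ wordLength S y) {g₀ h₁ h₂ : G}
    (hlt : wordLength S (h₁ * g₀⁻¹) + wordLength S (h₂ * g₀⁻¹) < α)
    (heq : (h₁ : G ⧸ N) = h₂) : h₁ = h₂ := by
  by_contra hne
  have hmem : h₁ * h₂⁻¹ ∈ N := div_eq_mul_inv h₁ h₂ ▸ QuotientGroup.eq_iff_div_mem.mp heq
  have hαle := hα _ hmem (mul_inv_eq_one.not.mpr hne)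
  have htri := wordLength_mul_inv_le hsym hgen h₁ h₂ g₀
  omega

theorem injOn_mk_wordBall (hsym : S⁻¹ = S) (hgen : Subgroup.closure S = ⊤)
    (hα : ∀ y ∈ N, y ≠ 1 → α ≤ wordLength S y) (g₀ : G) {ρ : ℕ} (hρ : 2 * ρ < α) :
    Set.InjOn (QuotientGroup.mk : G → G ⧸ N) (wordBall S g₀ ρ) :=
  fun _ h₁ _ h₂ =>
    eq_of_mk_eq_of_wordLength_add_lt hsym hgen hα (g₀ := g₀) (by rw [mem_wordBall] at *; omega)

variable {g₀ : G} {r R : ℕ} {a : G → ℂ} {φ : G ⧸ N → ℂ}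

/-- The lift vanishes off its ball, yet agrees with `φ ∘ π` wherever `π` separates the point from
the ball of radius `R` carrying `φ`. -/
theorem liftToBall_apply (hsym : S⁻¹ = S) (hgen : Subgroup.closure S = ⊤)
    (hα : ∀ y ∈ N, y ≠ 1 → α ≤ wordLength S y) (hφR : support φ ⊆ (↑) '' wordBall S g₀ R)
    {ρ : ℕ} (hRρ : R ≤ ρ) {k : G} (hk : wordLength S (k * g₀⁻¹) + R < α) :
    liftToBall S N g₀ ρ φ k = φ k := by
  unfold liftToBall
  split_ifs with hkρ
  · rfl
  by_contra hne
  obtain ⟨h', hh'R, hmk⟩ := hφR (Ne.symm hne)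
  have : k = h' := eq_of_mk_eq_of_wordLength_add_lt hsym hgen hα (g₀ := g₀)
    (by rw [mem_wordBall] at hh'R; omega) hmk.symm
  exact hkρ (this ▸ hh'R.trans hRρ)

theorem support_conv_subset (hsym : S⁻¹ = S) (hgen : Subgroup.closure S = ⊤)
    (har : support a ⊆ {g | wordLength S g ≤ r}) {ψ : G → ℂ} {ρ : ℕ}
    (hψ : support ψ ⊆ wordBall S g₀ ρ) : support (conv a ψ) ⊆ wordBall S g₀ (r + ρ) := by
  intro h hh
  obtain ⟨g, hg⟩ := exists_ne_zero_of_finsum_ne_zero hh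
  have hgr : wordLength S g ≤ r := har (left_ne_zero_of_mul hg)
  have hgh : wordLength S (g⁻¹ * h * g₀⁻¹) ≤ ρ := hψ (right_ne_zero_of_mul hg)
  calc wordLength S (h * g₀⁻¹) = wordLength S (g * (g⁻¹ * h * g₀⁻¹)) := by group
    _ ≤ wordLength S g + wordLength S (g⁻¹ * h * g₀⁻¹) := wordLength_mul_le hsym hgen _ _
    _ ≤ r + ρ := Nat.add_le_add hgr hgh

theorem support_convQuot_subset (hsym : S⁻¹ = S) (hgen : Subgroup.closure S = ⊤)
    (har : support a ⊆ {g | wordLength S g ≤ r}) {ρ : ℕ}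
    (hφ : support φ ⊆ (↑) '' wordBall S g₀ ρ) :
    support (convQuot N a φ) ⊆ (↑) '' wordBall S g₀ (r + ρ) := by
  intro x hx
  obtain ⟨g, hg⟩ := exists_ne_zero_of_finsum_ne_zero hx
  have hgr : wordLength S g ≤ r := har (left_ne_zero_of_mul hg)
  obtain ⟨h', hh'ρ, hh'⟩ := hφ (right_ne_zero_of_mul hg)
  refine ⟨g * h', ?_, by rw [QuotientGroup.mk_mul, hh', mul_inv_cancel_left]⟩
  calc wordLength S (g * h' * g₀⁻¹) = wordLength S (g * (h' * g₀⁻¹)) := by group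
    _ ≤ wordLength S g + wordLength S (h' * g₀⁻¹) := wordLength_mul_le hsym hgen _ _
    _ ≤ r + ρ := Nat.add_le_add hgr hh'ρ

theorem conv_liftToBall_eq_convQuot (hsym : S⁻¹ = S) (hgen : Subgroup.closure S = ⊤)
    (hα : ∀ y ∈ N, y ≠ 1 → α ≤ wordLength S y) (har : support a ⊆ {g | wordLength S g ≤ r})
    (hφR : support φ ⊆ (↑) '' wordBall S g₀ R) {ρ ρ' : ℕ} (hRρ : R ≤ ρ)
    (hρ' : ρ' + r + R < α) {h : G} (hh : h ∈ wordBall S g₀ ρ') :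
    conv a (liftToBall S N g₀ ρ φ) h = convQuot N a φ h := by
  unfold conv convQuot
  refine finsum_congr fun g => ?_
  by_cases hag : a g = 0
  · simp [hag]
  have hgh : wordLength S (g⁻¹ * h * g₀⁻¹) ≤ r + ρ' :=
    calc wordLength S (g⁻¹ * h * g₀⁻¹) = wordLength S (g⁻¹ * (h * g₀⁻¹)) := by group
      _ ≤ wordLength S g⁻¹ + wordLength S (h * g₀⁻¹) := wordLength_mul_le hsym hgen _ _
      _ ≤ r + ρ' := Nat.add_le_add ((wordLength_inv_le hsym hgen g).trans (har hag)) hh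
  rw [liftToBall_apply hsym hgen hα hφR hRρ (by omega), QuotientGroup.mk_mul,
    QuotientGroup.mk_inv]

end Lift

theorem stmt_11_general {G : Type*} [Group G] (S : Set G)
    (hsym : S⁻¹ = S) (hgen : Subgroup.closure S = ⊤)
    (N : Subgroup G) [N.Normal] (α r R : ℕ)
    (hα : α = sInf {m : ℕ | ∃ y : G, y ∈ N ∧ y ≠ 1 ∧ wordLength S y = m})
    (hRr : 4 * (R + r) < α) (g₀ : G)
    (a : G → ℂ)
    (har : Function.support a ⊆ {g : G | wordLength S g ≤ r})
    (φ : G ⧸ N → ℂ)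
    (hφR : Function.support φ ⊆
      {x : G ⧸ N | ∃ h : G, QuotientGroup.mk' N h = x ∧ wordLength S (h * g₀⁻¹) ≤ R})
    (φ' : G → ℂ)
    (hφ' : ∀ h : G, φ' h =
      if wordLength S (h * g₀⁻¹) ≤ R + r then φ (QuotientGroup.mk' N h) else 0) :
    (∑ᶠ h : G, ‖φ' h‖ ^ 2 = ∑ᶠ x : G ⧸ N, ‖φ x‖ ^ 2) ∧
    (∑ᶠ h : G, ‖∑ᶠ g : G, a g * φ' (g⁻¹ * h)‖ ^ 2 =
      ∑ᶠ x : G ⧸ N, ‖∑ᶠ g : G, a g * φ ((QuotientGroup.mk' N g)⁻¹ * x)‖ ^ 2) := by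
  have hαN : ∀ y ∈ N, y ≠ 1 → α ≤ wordLength S y := fun y hy hy1 =>
    hα ▸ Nat.sInf_le ⟨y, hy, hy1, rfl⟩
  have hφR' : support φ ⊆ (↑) '' wordBall S g₀ R := fun x hx =>
    let ⟨h, hhx, hhR⟩ := hφR hx
    ⟨h, hhR, hhx⟩
  obtain rfl : φ' = liftToBall S N g₀ (R + r) φ := funext hφ'
  constructor
  · refine finsum_eq_finsum_of_injOn (injOn_mk_wordBall (N := N) hsym hgen hαN g₀ (by omega))
      ((support_norm_sq _).trans_subset (support_liftToBall_subset _))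
      ((support_norm_sq _).trans_subset (hφR'.trans (Set.image_mono (wordBall_mono le_self_add))))
      fun h hh => by rw [liftToBall, if_pos (mem_wordBall.mp hh)]
  · change ∑ᶠ h, ‖conv a (liftToBall S N g₀ (R + r) φ) h‖ ^ 2 = ∑ᶠ x, ‖convQuot N a φ x‖ ^ 2
    have hconv : support (conv a (liftToBall S N g₀ (R + r) φ)) ⊆ wordBall S g₀ (r + (R + r)) :=
      support_conv_subset hsym hgen har (support_liftToBall_subset (R + r))
    have hconvQuot := (support_convQuot_subset hsym hgen har hφR').trans
      (Set.image_mono (wordBall_mono (show r + R ≤ r + (R + r) by omega)))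
    refine finsum_eq_finsum_of_injOn (injOn_mk_wordBall (N := N) hsym hgen hαN g₀ (by omega))
      ((support_norm_sq _).trans_subset hconv) ((support_norm_sq _).trans_subset hconvQuot)
      fun h hh => ?_
    rw [conv_liftToBall_eq_convQuot hsym hgen hαN har hφR' le_self_add (by omega) hh]

/-- Under 4(R + r) < α, lifting a function φ on G/N supported in a
ball of radius R around π(g₀) to the ball of radius R + r around g₀ preserves
the l² norm and the l² norm of the image under λ(a), for a supported in the
ball of radius r. -/
theorem stmt_11 {G : Type*} [Group G] (S : Set G)
    (hsym : S⁻¹ = S) (hgen : Subgroup.closure S = ⊤)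
    (N : Subgroup G) [N.Normal] (hN : N ≠ ⊥) (α r R : ℕ)
    (hα : α = sInf {m : ℕ | ∃ y : G, y ∈ N ∧ y ≠ 1 ∧ wordLength S y = m})
    (hRr : 4 * (R + r) < α) (g₀ : G)
    (a : G → ℂ) (ha : (Function.support a).Finite)
    (har : Function.support a ⊆ {g : G | wordLength S g ≤ r})
    (φ : G ⧸ N → ℂ) (hφ : (Function.support φ).Finite)
    (hφR : Function.support φ ⊆
      {x : G ⧸ N | ∃ h : G, QuotientGroup.mk' N h = x ∧ wordLength S (h * g₀⁻¹) ≤ R})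
    (φ' : G → ℂ)
    (hφ' : ∀ h : G, φ' h =
      if wordLength S (h * g₀⁻¹) ≤ R + r then φ (QuotientGroup.mk' N h) else 0) :
    (∑ᶠ h : G, ‖φ' h‖ ^ 2 = ∑ᶠ x : G ⧸ N, ‖φ x‖ ^ 2) ∧
    (∑ᶠ h : G, ‖∑ᶠ g : G, a g * φ' (g⁻¹ * h)‖ ^ 2 =
      ∑ᶠ x : G ⧸ N, ‖∑ᶠ g : G, a g * φ ((QuotientGroup.mk' N g)⁻¹ * x)‖ ^ 2) :=
  stmt_11_general S hsym hgen N α r R hα hRr g₀ a har φ hφR φ' hφ'
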